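/- arXiv:1003.5029 — 2 statements merged into one kernel-verified Lean document; each statement's English description precedes it below -/
import Mathlib

section
/- Let ℓ and ℓ₀ be distinct prime numbers, let d ≥ 1, n ≥ 1, and r, u, w̄ be nonnegative integers, and let f be an integer with 1 ≤ f ≤ d; set q = ℓ₀^f, M = max(n·r, w̄/2) (a rational number), and c_n = binomial(n, ⌊n/2⌋). Let s, t₁, …, t_n be nonnegative integers with s ≤ u and 0 ≤ t_k ≤ r·u for every k. Let α₁, …, α_n be algebraic integers in ℂ (elements of the integral closure of ℤ in ℂ) such that the polynomial ∏_{k=1}^n (X − α_k) has rational integer coefficients, and let w₁, …, w_n be nonnegative integers with w₁ + ⋯ + w_n ≤ w̄ and |α_k| = q^{w_k/2} for every k. Let F be an algebraically closed field of characteristic ℓ and let φ be a ring homomorphism from the integral closure of ℤ in ℂ to F. If the multiset {φ(α₁^s), φ(α₂^s), …, φ(α_n^s)} equals the multiset {(q : F)^{t₁}, (q : F)^{t₂}, …, (q : F)^{t_n}} and ℓ > 2·c_n·ℓ₀^{d·M·u} (as real numbers), then the multiset {α₁^s, α₂^s, …, α_n^s} equals the multiset {q^{t₁}, q^{t₂},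 …, q^{t_n}} in ℂ; in particular, the multiset {s·w₁, s·w₂, …, s·w_n} equals the multiset {2·t₁, 2·t₂, …, 2·t_n} of natural numbers. -/
open Polynomial

/-!
The elementary symmetric functions of the `α k ^ s` are symmetric integer polynomials in the
`α k`, hence integer polynomials in the coefficients of `∏ (X - α k)`, hence rational integers;
those of the `q ^ t k` are integers as well. The hypothesis on the reductions makes the two
families congruent modulo `ℓ`, and the Weil bounds `|α k| = q ^ (w k / 2)` bound both by
`c_n ℓ₀ ^ (d M u)`. As `ℓ` exceeds twice that bound, they coincide, so the two multisets, being the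
roots of the same polynomial, are equal. Taking absolute values then recovers the weights.
-/

section Integrality

variable {σ S : Type*} [Fintype σ] [CommRing S]

theorem Multiset.esymm_mem_of_forall_coeff_mem {A : Subring S} {s : Multiset S}
    (h : ∀ i, (s.map fun x => X - C x).prod.coeff i ∈ A) (j : ℕ) : s.esymm j ∈ A := by
  rcases le_or_gt j (Multiset.card s) with hj | hj
  · have hcoeff := s.prod_X_sub_C_coeff (Nat.sub_le (Multiset.card s) j)
    rw [Nat.sub_sub_self hj] at hcoeff
    have hsign : s.esymm j = (-1) ^ j * (s.map fun x => X - C x).prod.coeff (card s - j) := by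
      rw [hcoeff, ← mul_assoc, ← mul_pow]
      simp
    rw [hsign]
    exact A.mul_mem (A.pow_mem (A.neg_mem A.one_mem) _) (h _)
  · simp [Multiset.esymm, Multiset.powersetCard_eq_empty _ hj, A.zero_mem]

open MvPolynomial in
theorem MvPolynomial.IsSymmetric.aeval_mem {A : Subring S} {a : σ → S}
    (ha : ∀ j, aeval a (esymm σ ℤ j) ∈ A) {p : MvPolynomial σ ℤ} (hp : p.IsSymmetric) :
    aeval a p ∈ A := by
  obtain ⟨g, hg⟩ := esymmAlgHom_surjective ℤ (n := Fintype.card σ) le_rfl ⟨p, hp⟩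
  have hp' : p = aeval (fun i : Fin _ => esymm σ ℤ (i + 1)) g := by
    rw [← esymmAlgHom_apply, hg]
  let e : Fin (Fintype.card σ) → A := fun i => ⟨_, ha (i + 1)⟩
  have he : aeval a p = A.subtype.toIntAlgHom (aeval e g) := by
    rw [hp', comp_aeval_apply, comp_aeval_apply]
    rfl
  exact he ▸ (aeval e g).2

open MvPolynomial in
theorem Multiset.esymm_map_pow_mem {A : Subring S} {a : σ → S}
    (ha : ∀ j, (Finset.univ.val.map a).esymm j ∈ A) (s j : ℕ) :
    (Finset.univ.val.map fun k => a k ^ s).esymm j ∈ A := by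
  simp only [← aeval_esymm_eq_multiset_esymm σ ℤ] at ha ⊢
  have hsymm : (expand s (MvPolynomial.esymm σ ℤ j)).IsSymmetric := fun e => by
    rw [rename_expand, rename_esymm]
  simpa [MvPolynomial.expand, aeval_bind₁, Pi.pow_def] using hsymm.aeval_mem ha

end Integrality

theorem Multiset.map_esymm {R S : Type*} [CommSemiring R] [CommSemiring S] (g : R →+* S)
    (s : Multiset R) (j : ℕ) : g (s.esymm j) = (s.map g).esymm j := by
  simp [Multiset.esymm, map_multiset_sum, map_multiset_prod, Multiset.powersetCard_map,
    Multiset.map_map]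

theorem Multiset.eq_of_esymm_eq {R : Type*} [CommRing R] [IsDomain R] {s t : Multiset R}
    (hcard : Multiset.card s = Multiset.card t) (h : ∀ j, s.esymm j = t.esymm j) : s = t := by
  rw [← roots_multiset_prod_X_sub_C s, ← roots_multiset_prod_X_sub_C t,
    Multiset.prod_X_sub_X_eq_sum_esymm, Multiset.prod_X_sub_X_eq_sum_esymm, hcard]
  simp_rw [h]

theorem Int.eq_of_dvd_sub_of_abs_le {ℓ b c : ℤ} {B : ℝ} (hdvd : ℓ ∣ b - c) (hb : |(b : ℝ)| ≤ B)
    (hc : |(c : ℝ)| ≤ B) (hB : 2 * B < ℓ) : b = c := by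
  refine sub_eq_zero.1 (Int.eq_zero_of_abs_lt_dvd hdvd ?_)
  have : |((b - c : ℤ) : ℝ)| < ℓ := by
    push_cast
    linarith [abs_sub (b : ℝ) c]
  exact_mod_cast this

theorem Multiset.map_eq_of_map_eq_of_norm_esymm_le {R F : Type*} [CommRing R] [CommRing F]
    {ℓ : ℕ} [CharP F ℓ] {ι : R →+* ℂ} (hι : Function.Injective ι) (φ : R →+* F)
    {s : Multiset R} {t : Multiset ℤ} (hst : s.map φ = t.map Int.cast)
    (hint : ∀ j, (s.map ι).esymm j ∈ (⊥ : Subring ℂ)) {B : ℝ} (hB : 2 * B < ℓ)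
    (hs : ∀ j, ‖(s.map ι).esymm j‖ ≤ B) (ht : ∀ j, ‖(t.map Int.cast : Multiset ℂ).esymm j‖ ≤ B) :
    s.map ι = t.map Int.cast := by
  refine Multiset.eq_of_esymm_eq (by simpa using congrArg card hst) fun j => ?_
  obtain ⟨b, hb⟩ := Subring.mem_bot.1 (hint j)
  have hbR : s.esymm j = b := hι (by rw [map_esymm, map_intCast, hb])
  have hdvd : (ℓ : ℤ) ∣ b - t.esymm j := by
    refine (CharP.intCast_eq_zero_iff F ℓ _).1 ?_
    rw [Int.cast_sub, ← map_intCast φ, ← hbR, map_esymm, hst, ← eq_intCast (Int.castRingHom F),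
      map_esymm, sub_eq_zero]
    rfl
  have hct : ((t.esymm j : ℤ) : ℂ) = (t.map Int.cast).esymm j := by
    rw [← eq_intCast (Int.castRingHom ℂ), map_esymm]
    rfl
  rw [← hb, ← hct, Int.eq_of_dvd_sub_of_abs_le hdvd (B := B) ?_ ?_ (by exact_mod_cast hB)]
  · rw [← Complex.norm_intCast, hb]
    exact hs j
  · rw [← Complex.norm_intCast, hct]
    exact ht j

section Weights

variable {ι 𝕜 : Type*}

theorem norm_esymm_le_choose_mul [Fintype ι] {R : Type*} [SeminormedCommRing R] (v : ι → R)
    {L : ℝ} (h : ∀ S : Finset ι, ‖∏ k ∈ S, v k‖ ≤ L) (j : ℕ) :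
    ‖(Finset.univ.val.map v).esymm j‖ ≤ (Fintype.card ι).choose (Fintype.card ι / 2) * L := by
  have hL : 0 ≤ L := (norm_nonneg _).trans (h ∅)
  rw [Finset.esymm_map_val]
  calc ‖∑ S ∈ Finset.powersetCard j Finset.univ, ∏ k ∈ S, v k‖
      ≤ ∑ S ∈ Finset.powersetCard j Finset.univ, ‖∏ k ∈ S, v k‖ := norm_sum_le _ _
    _ ≤ ∑ _S ∈ Finset.powersetCard j (Finset.univ : Finset ι), L :=
        Finset.sum_le_sum fun S _ => h S
    _ = (Fintype.card ι).choose j * L := by simp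
    _ ≤ (Fintype.card ι).choose (Fintype.card ι / 2) * L := by
        gcongr
        exact Nat.choose_le_middle j _

/-- Each `v k` is a `q`-Weil number of weight `m k`. -/
def HasWeights [Norm 𝕜] (q : ℝ) (v : ι → 𝕜) (m : ι → ℕ) : Prop :=
  ∀ k, ‖v k‖ = q ^ ((m k : ℝ) / 2)

theorem HasWeights.pow [NormedDivisionRing 𝕜] {q : ℝ} {v : ι → 𝕜} {m : ι → ℕ}
    (hq : 0 ≤ q) (hv : HasWeights q v m) (s : ℕ) :
    HasWeights q (fun k => v k ^ s) (fun k => s * m k) := fun k => by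
  rw [norm_pow, hv k, ← Real.rpow_natCast, ← Real.rpow_mul hq]
  push_cast
  ring_nf

theorem hasWeights_natCast_pow [RCLike 𝕜] (q : ℕ) (t : ι → ℕ) :
    HasWeights q (fun k => (q : 𝕜) ^ t k) (fun k => 2 * t k) := fun k => by
  rw [norm_pow, RCLike.norm_natCast, ← Real.rpow_natCast]
  push_cast
  ring_nf

theorem HasWeights.norm_esymm_le [Fintype ι] [NormedField 𝕜] {q : ℝ} {v : ι → 𝕜}
    {m : ι → ℕ} (hq : 1 ≤ q) (hv : HasWeights q v m) (j : ℕ) :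
    ‖(Finset.univ.val.map v).esymm j‖ ≤
      (Fintype.card ι).choose (Fintype.card ι / 2) * q ^ (((∑ k, m k : ℕ) : ℝ) / 2) := by
  refine norm_esymm_le_choose_mul v (fun S => ?_) j
  rw [norm_prod, Finset.prod_congr rfl fun k _ => hv k,
    ← Real.rpow_sum_of_pos (zero_lt_one.trans_le hq), ← Finset.sum_div]
  gcongr
  exact_mod_cast Finset.sum_le_sum_of_subset (Finset.subset_univ S)

theorem HasWeights.norm_esymm_le_rpow [Fintype ι] [NormedField 𝕜] {ℓ₀ f d N : ℕ} {x : ℝ}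
    {v : ι → 𝕜} {m : ι → ℕ} (hℓ₀ : 1 ≤ ℓ₀) (hfd : f ≤ d) (hv : HasWeights (ℓ₀ ^ f : ℕ) v m)
    (hm : ∑ k, m k ≤ N) (hN : (N : ℝ) ≤ 2 * x) (j : ℕ) :
    ‖(Finset.univ.val.map v).esymm j‖ ≤
      (Fintype.card ι).choose (Fintype.card ι / 2) * (ℓ₀ : ℝ) ^ (d * x) := by
  have hℓ₀' : (1 : ℝ) ≤ ℓ₀ := by exact_mod_cast hℓ₀
  refine (hv.norm_esymm_le (by push_cast; exact one_le_pow₀ hℓ₀') j).trans ?_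
  rw [Nat.cast_pow, ← Real.rpow_natCast, ← Real.rpow_mul (zero_le_one.trans hℓ₀')]
  have hmN : ((∑ k, m k : ℕ) : ℝ) ≤ N := by exact_mod_cast hm
  gcongr
  linarith

theorem HasWeights.map_eq [Fintype ι] [Norm 𝕜] {q : ℝ} {v v' : ι → 𝕜} {m m' : ι → ℕ}
    (hq : 1 < q) (hv : HasWeights q v m) (hv' : HasWeights q v' m')
    (h : Finset.univ.val.map v = Finset.univ.val.map v') :
    Finset.univ.val.map m = Finset.univ.val.map m' := by
  have hinj : Function.Injective fun e : ℕ => q ^ ((e : ℝ) / 2) := fun e e' he => by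
    have := (Real.rpow_right_inj (zero_lt_one.trans hq) hq.ne').1 he
    exact_mod_cast (div_left_inj' two_ne_zero).1 this
  apply Multiset.map_injective hinj
  simpa [Multiset.map_map, Function.comp_def, ← hv _, ← hv' _] using
    congrArg (Multiset.map norm) h

end Weights

theorem stmt_0_general
    (ℓ ℓ₀ : ℕ) (hℓ₀ : ℓ₀.Prime)
    (d n r u wbar : ℕ)
    (f : ℕ) (hf1 : 1 ≤ f) (hfd : f ≤ d)
    (q : ℕ) (hq : q = ℓ₀ ^ f)
    (M : ℚ) (hM : M = max ((n * r : ℕ) : ℚ) ((wbar : ℚ) / 2))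
    (cn : ℕ) (hcn : cn = n.choose (n / 2))
    (s : ℕ) (t : Fin n → ℕ) (hs : s ≤ u) (ht : ∀ k, t k ≤ r * u)
    (α : Fin n → integralClosure ℤ ℂ)
    (hint : ∀ i : ℕ, ∃ z : ℤ, (∏ k, (X - C (α k : ℂ))).coeff i = (z : ℂ))
    (w : Fin n → ℕ) (hw : ∑ k, w k ≤ wbar)
    (habs : ∀ k, ‖(α k : ℂ)‖ = (q : ℝ) ^ ((w k : ℝ) / 2))
    (F : Type*) [Field F] [CharP F ℓ]
    (φ : integralClosure ℤ ℂ →+* F)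
    (hmod : Multiset.map (fun k => φ (α k ^ s)) Finset.univ.val
          = Multiset.map (fun k => (q : F) ^ t k) Finset.univ.val)
    (hbig : (ℓ : ℝ) > 2 * cn * (ℓ₀ : ℝ) ^ (((d * M * u : ℚ) : ℝ))) :
    Multiset.map (fun k => (α k : ℂ) ^ s) Finset.univ.val
        = Multiset.map (fun k => (q : ℂ) ^ t k) Finset.univ.val
    ∧ Multiset.map (fun k => s * w k) Finset.univ.val
        = Multiset.map (fun k => 2 * t k) (Finset.univ.val : Multiset (Fin n)) := by
  subst hq hcn
  have hq1 : (1 : ℝ) < (ℓ₀ ^ f : ℕ) := by exact_mod_cast Nat.one_lt_pow (by omega) hℓ₀.one_lt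
  have hβ : HasWeights (ℓ₀ ^ f : ℕ) (fun k => (α k : ℂ) ^ s) (fun k => s * w k) :=
    HasWeights.pow (Nat.cast_nonneg _) habs s
  have hγ : HasWeights (ℓ₀ ^ f : ℕ) (fun k => ((ℓ₀ ^ f : ℕ) : ℂ) ^ t k) (fun k => 2 * t k) :=
    hasWeights_natCast_pow _ t
  have hMnr : (n * r : ℝ) ≤ M := by rw [hM]; push_cast; exact le_max_left _ _
  have hMw : (wbar / 2 : ℝ) ≤ M := by rw [hM]; push_cast; exact le_max_right _ _
  have hβbound := hβ.norm_esymm_le_rpow hℓ₀.one_le hfd (N := u * wbar) (x := M * u)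
    (by rw [← Finset.mul_sum]; exact Nat.mul_le_mul hs hw) (by push_cast; nlinarith)
  have hγbound := hγ.norm_esymm_le_rpow hℓ₀.one_le hfd (N := n * (2 * (r * u))) (x := M * u)
    (by simpa using Finset.sum_le_card_nsmul Finset.univ _ _ fun k _ =>
      Nat.mul_le_mul_left 2 (ht k))
    (by push_cast; nlinarith)
  rw [Fintype.card_fin] at hβbound hγbound
  rw [gt_iff_lt, mul_assoc, (by push_cast; ring : ((d * M * u : ℚ) : ℝ) = d * (M * u))] at hbig
  have hαint : ∀ j, (Finset.univ.val.map fun k => (α k : ℂ)).esymm j ∈ (⊥ : Subring ℂ) := by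
    refine Multiset.esymm_mem_of_forall_coeff_mem fun i => ?_
    obtain ⟨z, hz⟩ := hint i
    rw [Multiset.map_map, ← Finset.prod_eq_multiset_prod]
    exact Subring.mem_bot.2 ⟨z, hz.symm⟩
  have hroots := Multiset.map_eq_of_map_eq_of_norm_esymm_le
    (ι := (integralClosure ℤ ℂ).val.toRingHom) Subtype.val_injective φ
    (s := Finset.univ.val.map fun k => α k ^ s)
    (t := Finset.univ.val.map fun k => ((ℓ₀ ^ f : ℕ) : ℤ) ^ t k)
  simp only [Multiset.map_map, Function.comp_def, Int.cast_pow, Int.cast_natCast] at hroots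
  specialize hroots hmod (Multiset.esymm_map_pow_mem hαint s) hbig hβbound hγbound
  exact ⟨hroots, hβ.map_eq hq1 hγ hroots⟩

/-- Lemma 2.5 of the paper: if the multiset of reductions mod ℓ of the `s`-th powers
of the Frobenius eigenvalues coincides with a multiset of powers of `q`, and `ℓ` is
large enough, then the equality already holds in `ℂ`, and the multiset of weights is
determined. -/
theorem stmt_0
    (ℓ ℓ₀ : ℕ) (hℓ : ℓ.Prime) (hℓ₀ : ℓ₀.Prime) (hne : ℓ ≠ ℓ₀)
    (d n r u wbar : ℕ) (hd : 1 ≤ d) (hn : 1 ≤ n)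
    (f : ℕ) (hf1 : 1 ≤ f) (hfd : f ≤ d)
    (q : ℕ) (hq : q = ℓ₀ ^ f)
    (M : ℚ) (hM : M = max ((n * r : ℕ) : ℚ) ((wbar : ℚ) / 2))
    (cn : ℕ) (hcn : cn = n.choose (n / 2))
    (s : ℕ) (t : Fin n → ℕ) (hs : s ≤ u) (ht : ∀ k, t k ≤ r * u)
    (α : Fin n → integralClosure ℤ ℂ)
    (hint : ∀ i : ℕ, ∃ z : ℤ, (∏ k, (X - C (α k : ℂ))).coeff i = (z : ℂ))
    (w : Fin n → ℕ) (hw : ∑ k, w k ≤ wbar)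
    (habs : ∀ k, ‖(α k : ℂ)‖ = (q : ℝ) ^ ((w k : ℝ) / 2))
    (F : Type*) [Field F] [IsAlgClosed F] [CharP F ℓ]
    (φ : integralClosure ℤ ℂ →+* F)
    (hmod : Multiset.map (fun k => φ (α k ^ s)) Finset.univ.val
          = Multiset.map (fun k => (q : F) ^ t k) Finset.univ.val)
    (hbig : (ℓ : ℝ) > 2 * cn * (ℓ₀ : ℝ) ^ (((d * M * u : ℚ) : ℝ))) :
    Multiset.map (fun k => (α k : ℂ) ^ s) Finset.univ.val
        = Multiset.map (fun k => (q : ℂ) ^ t k) Finset.univ.val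
    ∧ Multiset.map (fun k => s * w k) Finset.univ.val
        = Multiset.map (fun k => 2 * t k) (Finset.univ.val : Multiset (Fin n)) :=
  stmt_0_general ℓ ℓ₀ hℓ₀ d n r u wbar f hf1 hfd q hq M hM cn hcn s t hs ht α hint w hw habs F φ
    hmod hbig
end

section
/- Let ℓ be a prime number, let V be a nonzero finite-dimensional vector space over 𝔽_ℓ of dimension n, let G be a group, let ρ : G → GL(V) be a group homomorphism, and let χ : G → 𝔽_ℓ^× be a group homomorphism whose kernel N satisfies: the image ρ(N) is an ℓ-group. Then V admits a filtration of G-stable subspaces {0} = V₀ ⊂ V₁ ⊂ ⋯ ⊂ V_{n−1} ⊂ V_n = V such that V_k has dimension k for each 1 ≤ k ≤ n, and for each 1 ≤ k ≤ n there exists an integer a_k with 0 ≤ a_k < |χ(G)| such that for all g ∈ G and v ∈ V_k one has ρ(g)v − χ(g)^{a_k}·v ∈ V_{k−1} (i.e., G acts on the quotient V_k/V_{k−1} through the character χ^{a_k}). -/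
/-!
Let `N = ker χ`. For every `G`-stable `U ⊊ V`, the `ℓ`-group `ρ(N)` acts on the quotient `V ⧸ U`,
whose order is a power of `ℓ`, so it fixes a nonzero vector. `G` acts on the `N`-invariants through
the cyclic group `χ(G)` of order `m`; if `χ(g₀)` generates it, then `ρ(g₀)^m` is the identity on
the invariants, and since `X^m - 1` splits (its roots are the elements of `χ(G)`), `ρ(g₀)` has an
eigenvector there, with eigenvalue `χ(g₀)^a` for some `a < m`. Every `g` is `g₀^k` modulo `N`, so
it acts on that vector by `χ(g)^a`. Adding a lift of it to `U` gives the flag one step at a time.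
-/

open Module Polynomial

theorem IsPGroup.map_of_ker_le {p : ℕ} {G H₁ H₂ : Type*} [Group G] [Group H₁] [Group H₂]
    {f₁ : G →* H₁} {f₂ : G →* H₂} (hker : f₁.ker ≤ f₂.ker) {S : Subgroup G}
    (hS : IsPGroup p (S.map f₁)) : IsPGroup p (S.map f₂) := by
  rintro ⟨_, s, hs, rfl⟩
  obtain ⟨k, hk⟩ := hS ⟨f₁ s, s, hs, rfl⟩
  have hpow : s ^ p ^ k ∈ f₂.ker := hker <| by simpa [← map_pow] using congrArg Subtype.val hk
  exact ⟨k, Subtype.ext <| by simpa using hpow⟩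

theorem Module.End.exists_hasEigenvalue_of_aeval_eq_zero {K V : Type*} [Field K] [AddCommGroup V]
    [Module K V] [FiniteDimensional K V] [Nontrivial V] {f : End K V} {q : K[X]}
    (hq : q.Splits) (hq0 : q ≠ 0) (hfq : aeval f q = 0) : ∃ μ, f.HasEigenvalue μ := by
  have hmin : (minpoly K f).Splits := hq.of_dvd hq0 (minpoly.dvd K f hfq)
  obtain ⟨μ, hμ⟩ := hmin.exists_eval_eq_zero
    (minpoly.degree_pos (Algebra.IsIntegral.isIntegral f)).ne'
  exact ⟨μ, hasEigenvalue_of_isRoot hμ⟩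

namespace Submodule

variable {K V : Type*} [Field K] [AddCommGroup V] [Module K V]

theorem apply_sub_smul_mem_of_mem_sup_span_singleton {U : Submodule K V} {f : End K V}
    {v x : V} {c : K} (hU : U ≤ U.comap f) (hv : f v - c • v ∈ U) (hx : x ∈ U ⊔ K ∙ v) :
    f x - c • x ∈ U := by
  obtain ⟨y, hy, z, hz, rfl⟩ := mem_sup.mp hx
  obtain ⟨t, rfl⟩ := mem_span_singleton.mp hz
  have key : f (y + t • v) - c • (y + t • v) = (f y - c • y) + t • (f v - c • v) := by
    simp only [map_add, map_smul, smul_add, smul_sub, smul_comm c t]; abel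
  rw [key]
  exact add_mem (sub_mem (hU hy) (smul_mem _ _ hy)) (smul_mem _ _ hv)

theorem sup_span_singleton_le_comap {U : Submodule K V} {f : End K V} {v : V} {c : K}
    (hU : U ≤ U.comap f) (hv : f v - c • v ∈ U) :
    U ⊔ K ∙ v ≤ (U ⊔ K ∙ v).comap f := fun x hx => by
  have hx' := apply_sub_smul_mem_of_mem_sup_span_singleton hU hv hx
  simpa using add_mem (le_sup_left (b := K ∙ v) hx') (smul_mem _ c hx)

end Submodule

namespace Representation

variable {K G V : Type*} [Field K] [AddCommGroup V] [Module K V]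

theorem exists_flag_of_forall_exists_weight_vector [Monoid G] [FiniteDimensional K V] {n : ℕ}
    (hdim : finrank K V = n) (ρ : Representation K G V) (S : Set (G → K))
    (h : ∀ U : Submodule K V, (∀ g, U ≤ U.comap (ρ g)) → U ≠ ⊤ →
      ∃ v ∉ U, ∃ c ∈ S, ∀ g, ρ g v - c g • v ∈ U) :
    ∃ W : Fin (n + 1) → Submodule K V,
      W 0 = ⊥ ∧ W (Fin.last n) = ⊤ ∧ (∀ k : Fin n, W k.castSucc ≤ W k.succ) ∧
      (∀ k : Fin (n + 1), finrank K (W k) = k) ∧ (∀ k g, W k ≤ (W k).comap (ρ g)) ∧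
      ∃ c : Fin n → G → K, (∀ k, c k ∈ S) ∧
        ∀ k g, ∀ v ∈ W k.succ, ρ g v - c k g • v ∈ W k.castSucc := by
  choose! v hvU c hcS hc using h
  set F : ℕ → Submodule K V := fun k => (fun U => U ⊔ K ∙ v U)^[k] ⊥
  have ne_top {U : Submodule K V} (hU : finrank K U < n) : U ≠ ⊤ := by
    rintro rfl
    rw [finrank_top] at hU
    omega
  have hF_succ (k : ℕ) : F (k + 1) = F k ⊔ K ∙ v (F k) := Function.iterate_succ_apply' ..
  have hF (k : ℕ) (hk : k ≤ n) :
      finrank K (F k) = k ∧ ∀ g, F k ≤ (F k).comap (ρ g) := by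
    induction k with
    | zero => exact ⟨finrank_bot K V, fun g => bot_le⟩
    | succ k ih =>
      obtain ⟨hrank, hstab⟩ := ih (by omega)
      have hne : F k ≠ ⊤ := ne_top (by omega)
      rw [hF_succ, Submodule.finrank_sup_span_singleton (hvU _ hstab hne), hrank]
      exact ⟨rfl, fun g => Submodule.sup_span_singleton_le_comap (hstab g) (hc _ hstab hne g)⟩
  have hF_ne_top (k : ℕ) (hk : k < n) : F k ≠ ⊤ := ne_top ((hF k hk.le).1.trans_lt hk)
  refine ⟨fun k => F k, rfl, ?_, fun k => le_sup_left.trans_eq (hF_succ k).symm,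
    fun k => (hF k k.is_le).1, fun k => (hF k k.is_le).2, fun k => c (F k),
    fun k => hcS _ (hF k k.is_lt.le).2 (hF_ne_top k k.is_lt), fun k g x hx => ?_⟩
  · exact Submodule.eq_top_of_finrank_eq ((hF n le_rfl).1.trans hdim.symm)
  · have hk := hF k k.is_lt.le
    dsimp only at hx ⊢
    rw [Fin.val_succ, hF_succ] at hx
    exact Submodule.apply_sub_smul_mem_of_mem_sup_span_singleton (hk.2 g)
      (hc _ hk.2 (hF_ne_top k k.is_lt) g) hx

section Group

variable [Group G]

theorem invariants_ne_bot_of_isPGroup {p : ℕ} [Fact p.Prime] [CharP K p] [Finite V]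
    [Nontrivial V] (ρ : Representation K G V) {S : Subgroup G}
    (hS : IsPGroup p (S.map ρ.asGroupHom)) : invariants (ρ.comp S.subtype) ≠ ⊥ := by
  have hpV : p ∣ Nat.card V := by
    obtain ⟨v, hv⟩ := exists_ne (0 : V)
    have hp : p • v = 0 := by rw [← Nat.cast_smul_eq_nsmul K, CharP.cast_eq_zero, zero_smul]
    exact addOrderOf_eq_prime hp hv ▸ addOrderOf_dvd_natCard v
  obtain ⟨v, hv, hv0⟩ :=
    hS.exists_fixed_point_of_prime_dvd_card_of_fixed_point V hpV (a := 0) fun _ => smul_zero _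
  exact (Submodule.ne_bot_iff _).mpr ⟨v, fun s => hv ⟨_, s, s.2, rfl⟩, hv0.symm⟩

theorem exists_weight_vector_of_isTrivial_ker [FiniteDimensional K V] [Nontrivial V]
    (ρ : Representation K G V) (χ : G →* Kˣ) [Finite χ.range]
    [IsTrivial (ρ.comp χ.ker.subtype)] :
    ∃ v : V, v ≠ 0 ∧ ∃ a < Nat.card χ.range, ∀ g, ρ g v = (χ g : K) ^ a • v := by
  obtain ⟨ζ, hζm⟩ := IsCyclic.exists_ofOrder_eq_natCard (α := χ.range)
  obtain ⟨g₀, hg₀⟩ := ζ.2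
  set m := Nat.card χ.range
  have : NeZero m := ⟨Nat.card_pos.ne'⟩
  have hζ : IsPrimitiveRoot (χ g₀ : K) m := by
    rw [IsPrimitiveRoot.coe_units_iff, hg₀, ← hζm, ← Subgroup.orderOf_coe]
    exact IsPrimitiveRoot.orderOf _
  have hχm (g : G) : (χ g : K) ^ m = 1 := by
    have h := congrArg (fun x : χ.range => ((x : Kˣ) : K))
      (pow_card_eq_one' (x := (⟨χ g, ⟨g, rfl⟩⟩ : χ.range)))
    simpa only [Subgroup.coe_pow, Units.val_pow_eq_pow_val, OneMemClass.coe_one,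
      Units.val_one] using h
  have hρ_eq {g h : G} (hgh : (χ g : K) = χ h) : ρ g = ρ h :=
    ρ.apply_eq_of_coe_eq χ.ker g h <| QuotientGroup.eq.mpr <| by
      simp [MonoidHom.mem_ker, Units.ext hgh]
  have hTm : ρ g₀ ^ m = 1 := by
    rw [← map_pow, hρ_eq (h := 1) (by simpa using hχm g₀), map_one]
  obtain ⟨μ, hμ⟩ := Module.End.exists_hasEigenvalue_of_aeval_eq_zero (f := ρ g₀)
    (X_pow_sub_one_splits hζ) (X_pow_sub_C_ne_zero (NeZero.pos m) 1) (by simp [hTm])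
  obtain ⟨v, hv⟩ := hμ.exists_hasEigenvector
  have hμm : μ ^ m = 1 :=
    smul_left_injective K hv.2 <| by simpa [hTm] using (hv.pow_apply m).symm
  obtain ⟨a, ha, rfl⟩ := hζ.eq_pow_of_pow_eq_one hμm
  refine ⟨v, hv.2, a, ha, fun g => ?_⟩
  obtain ⟨k, -, hk⟩ := hζ.eq_pow_of_pow_eq_one (hχm g)
  rw [hρ_eq (h := g₀ ^ k) (by simp [hk]), map_pow, hv.pow_apply, ← pow_mul, mul_comm, pow_mul, hk]

theorem exists_weight_vector_of_isPGroup {p : ℕ} [Fact p.Prime] [Finite K] [CharP K p]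
    [FiniteDimensional K V] [Nontrivial V] (ρ : Representation K G V) (χ : G →* Kˣ)
    (hN : IsPGroup p (χ.ker.map ρ.asGroupHom)) :
    ∃ v : V, v ≠ 0 ∧ ∃ a < Nat.card χ.range, ∀ g, ρ g v = (χ g : K) ^ a • v := by
  have : Finite V := Module.finite_of_finite K
  have := Submodule.nontrivial_iff_ne_bot.mpr (ρ.invariants_ne_bot_of_isPGroup hN)
  obtain ⟨v, hv, a, ha, hva⟩ := (ρ.toInvariants χ.ker).exists_weight_vector_of_isTrivial_ker χ
  exact ⟨v, by simpa using hv, a, ha, fun g => congrArg Subtype.val (hva g)⟩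

theorem exists_weight_vector_mod {p : ℕ} [Fact p.Prime] [Finite K] [CharP K p]
    [FiniteDimensional K V] (ρ : Representation K G V) (χ : G →* Kˣ)
    (hN : IsPGroup p (χ.ker.map ρ.asGroupHom)) (U : Submodule K V)
    (hU : ∀ g, U ≤ U.comap (ρ g)) (hUtop : U ≠ ⊤) :
    ∃ v ∉ U, ∃ a < Nat.card χ.range, ∀ g, ρ g v - (χ g : K) ^ a • v ∈ U := by
  have := Submodule.Quotient.nontrivial_iff.mpr hUtop
  have hker : ρ.asGroupHom.ker ≤ (ρ.quotient U hU).asGroupHom.ker := fun g hg => by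
    rw [MonoidHom.mem_ker, Units.ext_iff, asGroupHom_apply] at hg ⊢
    ext v
    simp [hg]
  obtain ⟨w, hw, a, ha, hwa⟩ :=
    (ρ.quotient U hU).exists_weight_vector_of_isPGroup χ (hN.map_of_ker_le hker)
  obtain ⟨v, rfl⟩ := U.mkQ_surjective w
  refine ⟨v, fun hv => hw ((Submodule.Quotient.mk_eq_zero U).mpr hv), a, ha, fun g => ?_⟩
  rw [← Submodule.Quotient.mk_eq_zero, Submodule.Quotient.mk_sub, sub_eq_zero]
  simpa using hwa g

end Group

end Representation

theorem stmt_1_general (ℓ : ℕ) [Fact ℓ.Prime] (n : ℕ)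
    (V : Type*) [AddCommGroup V] [Module (ZMod ℓ) V] [FiniteDimensional (ZMod ℓ) V]
    (hdim : Module.finrank (ZMod ℓ) V = n)
    (G : Type*) [Group G]
    (ρ : G →* (Module.End (ZMod ℓ) V)ˣ)
    (χ : G →* (ZMod ℓ)ˣ)
    (hN : IsPGroup ℓ (Subgroup.map ρ χ.ker)) :
    ∃ W : Fin (n + 1) → Submodule (ZMod ℓ) V,
      W 0 = ⊥ ∧ W (Fin.last n) = ⊤ ∧
      (∀ k : Fin n, W k.castSucc ≤ W k.succ) ∧
      (∀ k : Fin (n + 1), Module.finrank (ZMod ℓ) (W k) = (k : ℕ)) ∧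
      (∀ k : Fin (n + 1), ∀ g : G, ∀ v ∈ W k, (ρ g : Module.End (ZMod ℓ) V) v ∈ W k) ∧
      ∃ a : Fin n → ℕ,
        (∀ k, a k < Nat.card χ.range) ∧
        ∀ k : Fin n, ∀ g : G, ∀ v ∈ W k.succ,
          (ρ g : Module.End (ZMod ℓ) V) v - ((χ g : ZMod ℓ) ^ a k) • v ∈ W k.castSucc := by
  let ρ' : Representation (ZMod ℓ) G V := (Units.coeHom _).comp ρ
  have hρ' : ρ'.asGroupHom = ρ := by ext; rfl
  obtain ⟨W, hbot, htop, hmono, hrank, hstab, c, hcS, hc⟩ :=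
    ρ'.exists_flag_of_forall_exists_weight_vector hdim
      {ψ | ∃ a < Nat.card χ.range, ψ = fun g => (χ g : ZMod ℓ) ^ a} fun U hU hUtop => by
        obtain ⟨v, hv, a, ha, hva⟩ := ρ'.exists_weight_vector_mod χ (hρ' ▸ hN) U hU hUtop
        exact ⟨v, hv, _, ⟨a, ha, rfl⟩, hva⟩
  choose a ha hca using hcS
  refine ⟨W, hbot, htop, hmono, hrank, fun k g v hv => hstab k g hv, a, ha, fun k g v hv => ?_⟩
  have hv' := hc k g v hv
  rwa [hca k] at hv'

/-- Lemma 3.4 of the paper (Rasmussen–Tamagawa's Lemma): if `ρ(ker χ)` is an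
`ℓ`-group, then `V` admits a full flag of `G`-stable subspaces on whose graded
pieces `G` acts through powers `χ^{a_k}` with `0 ≤ a_k < |χ(G)|`. -/
theorem stmt_1 (ℓ : ℕ) [Fact ℓ.Prime] (n : ℕ) (hn : 0 < n)
    (V : Type*) [AddCommGroup V] [Module (ZMod ℓ) V] [FiniteDimensional (ZMod ℓ) V]
    (hdim : Module.finrank (ZMod ℓ) V = n)
    (G : Type*) [Group G]
    (ρ : G →* (Module.End (ZMod ℓ) V)ˣ)
    (χ : G →* (ZMod ℓ)ˣ)
    (hN : IsPGroup ℓ (Subgroup.map ρ χ.ker)) :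
    ∃ W : Fin (n + 1) → Submodule (ZMod ℓ) V,
      W 0 = ⊥ ∧ W (Fin.last n) = ⊤ ∧
      (∀ k : Fin n, W k.castSucc ≤ W k.succ) ∧
      (∀ k : Fin (n + 1), Module.finrank (ZMod ℓ) (W k) = (k : ℕ)) ∧
      (∀ k : Fin (n + 1), ∀ g : G, ∀ v ∈ W k, (ρ g : Module.End (ZMod ℓ) V) v ∈ W k) ∧
      ∃ a : Fin n → ℕ,
        (∀ k, a k < Nat.card χ.range) ∧
        ∀ k : Fin n, ∀ g : G, ∀ v ∈ W k.succ,
          (ρ g : Module.End (ZMod ℓ) V) v - ((χ g : ZMod ℓ) ^ a k) • v ∈ W k.castSucc :=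
  stmt_1_general ℓ n V hdim G ρ χ hN
end
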